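/- In a CGSP with short-sighted preferences, a strategy s of agent i is non-dominated at state w whenever its first action s(w) is a non-dominated action at w, where an action a of agent i is dominated at w if there exists an action a' of i available at w such that for every joint action δ of the other agents with both combined joint actions executable at w, the successor under δ⊕a is strictly ≺^succ_{i,w}-below the successor under δ⊕a'. -/

import Mathlib

universe u v

variable {n : ℕ} {W : Type} {Act : Type}

/-- A concurrent game structure (CGS): transition relations for joint actions,
satisfying collective choice determinism (C1), independence of choices (C2),
and seriality / neverending interaction (C3). -/
structure CGS (n : ℕ) (W Act : Type) where
  R : (Fin n → Act) → W → W → Prop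
  det : ∀ δ w v u, R δ w v → R δ w u → v = u
  indep : ∀ w (δ : Fin n → Act),
    (∀ i, ∃ δ' : Fin n → Act, (∃ v, R δ' w v) ∧ δ' i = δ i) → ∃ v, R δ w v
  serial : ∀ w, ∃ δ v, R δ w v

/-- The union transition relation R = ⋃_δ R_δ. -/
def CGS.Rall (M : CGS n W Act) (w v : W) : Prop := ∃ δ, M.R δ w v

/-- Agent i's choice set at state w. -/
def CGS.choice (M : CGS n W Act) (i : Fin n) (w : W) : Set Act :=
  {a | ∃ δ : Fin n → Act, (∃ v, M.R δ w v) ∧ δ i = a}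

/-- A computation (infinite full path) starting at w. -/
def Comp (M : CGS n W Act) (w : W) : Type :=
  {l : ℕ → W // l 0 = w ∧ ∀ k, M.Rall (l k) (l (k + 1))}

/-- The finite history `[l 0, …, l k]` of an infinite sequence. -/
def hist (l : ℕ → W) (k : ℕ) : List W := List.ofFn (fun j : Fin (k + 1) => l j)

/-- A perfect recall strategy of agent i: maps every finite path to an
available action at its last state. -/
def Strat (M : CGS n W Act) (i : Fin n) : Type :=
  {σ : List W → Act // ∀ (h : List W) (hne : h ≠ []),
    List.Chain' M.Rall h → σ h ∈ M.choice i (h.getLast hne)}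

/-- A collective strategy for coalition C. -/
def CStrat (M : CGS n W Act) (C : Set (Fin n)) : Type :=
  (i : Fin n) → i ∈ C → Strat M i

/-- The set of computations from w generated by collective strategy F of C. -/
def outSet (M : CGS n W Act) (C : Set (Fin n)) (w : W) (F : CStrat M C) :
    Set (Comp M w) :=
  {l | ∀ k, ∃ δ : Fin n → Act,
    (∀ i (hi : i ∈ C), (F i hi).val (hist l.val k) = δ i) ∧
    M.R δ (l.val k) (l.val (k + 1))}

/-- A CGS with preferences: a total preorder over computations starting at w,
for each agent i and state w. -/
structure CGSP (n : ℕ) (W Act : Type) extends CGS n W Act where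
  pref : (i : Fin n) → (w : W) → Comp toCGS w → Comp toCGS w → Prop
  pref_refl : ∀ i w l, pref i w l l
  pref_trans : ∀ i w l1 l2 l3, pref i w l1 l2 → pref i w l2 l3 → pref i w l1 l3
  pref_total : ∀ i w l1 l2, pref i w l1 l2 ∨ pref i w l2 l1

/-- Strict preference: l ≺_{i,w} l'. -/
def CGSP.spref (P : CGSP n W Act) (i : Fin n) (w : W)
    (l l' : Comp P.toCGS w) : Prop :=
  P.pref i w l l' ∧ ¬ P.pref i w l' l

/-- Combine a strategy of agent i with a collective strategy of the other
agents into a grand-coalition strategy. -/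
def combine (M : CGS n W Act) (i : Fin n) (s : Strat M i)
    (t : CStrat M ({i}ᶜ : Set (Fin n))) : CStrat M (Set.univ : Set (Fin n)) :=
  fun j _ =>
    if h : j = i then (by subst h; exact s)
    else t j (by simp only [Set.mem_compl_iff, Set.mem_singleton_iff]; exact h)

/-- Strategy s' dominates strategy s of agent i at w: against every collective
strategy of the remaining agents, the generated computation of s ⊕ t is
strictly below that of s' ⊕ t. -/
def Dominates (P : CGSP n W Act) (i : Fin n) (w : W)
    (s' s : Strat P.toCGS i) : Prop :=
  ∀ t : CStrat P.toCGS ({i}ᶜ : Set (Fin n)),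
    ∀ l ∈ outSet P.toCGS Set.univ w (combine P.toCGS i s t),
    ∀ l' ∈ outSet P.toCGS Set.univ w (combine P.toCGS i s' t),
      P.spref i w l l'

/-- A strategy is dominated at w if some strategy dominates it at w. -/
def Dominated (P : CGSP n W Act) (i : Fin n) (w : W)
    (s : Strat P.toCGS i) : Prop :=
  ∃ s', Dominates P i w s' s

/-- (P,w) ⊨ ⟨⟨C⟩⟩○φ. -/
def CanNext (M : CGS n W Act) (C : Set (Fin n)) (φ : W → Prop) (w : W) : Prop :=
  ∃ F : CStrat M C, ∀ l ∈ outSet M C w F, φ (l.val 1)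

/-- (P,w) ⊨ ⟨⟨C⟩⟩□φ. -/
def CanGlob (M : CGS n W Act) (C : Set (Fin n)) (φ : W → Prop) (w : W) : Prop :=
  ∃ F : CStrat M C, ∀ l ∈ outSet M C w F, ∀ k > 0, φ (l.val k)

/-- (P,w) ⊨ ⟨⟨C⟩⟩^r○φ. -/
def RatCanNext (P : CGSP n W Act) (C : Set (Fin n)) (φ : W → Prop) (w : W) :
    Prop :=
  ∃ F : CStrat P.toCGS C, (∀ i (hi : i ∈ C), ¬ Dominated P i w (F i hi)) ∧
    ∀ l ∈ outSet P.toCGS C w F, φ (l.val 1)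

/-- (P,w) ⊨ ⟨⟨C⟩⟩^r□φ. -/
def RatCanGlob (P : CGSP n W Act) (C : Set (Fin n)) (φ : W → Prop) (w : W) :
    Prop :=
  ∃ F : CStrat P.toCGS C, (∀ i (hi : i ∈ C), ¬ Dominated P i w (F i hi)) ∧
    ∀ l ∈ outSet P.toCGS C w F, ∀ k > 0, φ (l.val k)

/-- Short-sighted preferences: the preference between computations from w
depends only on their states at time 1 (indifference given equal next state). -/
def ShortSighted (P : CGSP n W Act) : Prop :=
  ∀ (i : Fin n) (w : W) (l l' : Comp P.toCGS w), l.val 1 = l'.val 1 →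
    P.pref i w l l' ∧ P.pref i w l' l

/-- Prepend a state to a sequence. -/
def prependFun (w : W) (l : ℕ → W) : ℕ → W
  | 0 => w
  | (k + 1) => l k

/-- Prepend a predecessor state w to a computation from v. -/
def Comp.prepend (M : CGS n W Act) {w v : W} (h : M.Rall w v)
    (l : Comp M v) : Comp M w :=
  ⟨prependFun w l.val, by
    refine ⟨rfl, ?_⟩
    intro k
    cases k with
    | zero =>
        show M.Rall w (l.val 0)
        rw [l.2.1]; exact h
    | succ k => exact l.2.2 k⟩

/-- Stable preferences: preferences do not change over time. -/
def Stable (P : CGSP n W Act) : Prop :=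
  ∀ (i : Fin n) (w v : W) (h : P.toCGS.Rall w v) (l l' : Comp P.toCGS v),
    P.pref i v l' l ↔
      P.pref i w (Comp.prepend P.toCGS h l') (Comp.prepend P.toCGS h l)

/-- Strict preference between successors of w, induced from preferences over
computations. -/
def sPrefSucc (P : CGSP n W Act) (i : Fin n) (w : W) (v u : W) : Prop :=
  ∃ l l' : Comp P.toCGS w, l.val 1 = v ∧ l'.val 1 = u ∧ P.spref i w l l'

/-- Action a of agent i is dominated at w: some available action a' does
strictly better against every joint action of the others (whenever both
combined joint actions are executable at w). -/
def ActionDominated (P : CGSP n W Act) [DecidableEq (Fin n)] (i : Fin n)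
    (w : W) (a : Act) : Prop :=
  ∃ a' ∈ P.toCGS.choice i w, ∀ δ : Fin n → Act, δ i = a →
    ∀ v v', P.toCGS.R δ w v → P.toCGS.R (Function.update δ i a') w v' →
      sPrefSucc P i w v v'

/-! Fix a strategy `t` of the other agents that, at the one-state history `[w]`, plays the
components of a given joint action `δ`. Then `s ⊕ t` and `s' ⊕ t` start with `δ` and with
`δ` updated at `i` to `s' [w]`. By independence of choices every history can be prolonged
along the joint action a grand-coalition strategy prescribes, so both first steps lie on
outcomes; domination of `s` by `s'` makes the first outcome strictly worse than the second,
which witnesses that `s [w]` is dominated by the action `s' [w]`. -/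

lemma hist_succ (l : ℕ → W) (k : ℕ) : hist l (k + 1) = hist l k ++ [l (k + 1)] := by
  unfold hist
  rw [List.ofFn_succ']
  simp [List.concat_eq_append]

namespace CGS

variable (M : CGS n W Act)

lemma choice_nonempty (i : Fin n) (u : W) : (M.choice i u).Nonempty := by
  obtain ⟨δ, v, h⟩ := M.serial u
  exact ⟨δ i, δ, ⟨v, h⟩, rfl⟩

def jointAction (F : CStrat M Set.univ) (L : List W) : Fin n → Act :=
  fun j => (F j (Set.mem_univ j)).val L

lemma exists_R_jointAction (F : CStrat M Set.univ) {L : List W} (hne : L ≠ [])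
    (hL : L.IsChain M.Rall) : ∃ v, M.R (M.jointAction F L) (L.getLast hne) v :=
  M.indep _ _ fun j => (F j (Set.mem_univ j)).2 L hne hL

abbrev Path : Type := {L : List W // L ≠ [] ∧ L.IsChain M.Rall}

noncomputable def Path.extend (F : CStrat M Set.univ) (L : M.Path) : M.Path :=
  ⟨L.1 ++ [(M.exists_R_jointAction F L.2.1 L.2.2).choose], by simp,
    L.2.2.append (List.isChain_singleton _) fun x hx y hy => by
      rw [List.getLast?_eq_getLast_of_ne_nil L.2.1, Option.mem_some_iff] at hx
      rw [List.head?_cons, Option.mem_some_iff] at hy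
      subst hx hy
      exact ⟨_, (M.exists_R_jointAction F L.2.1 L.2.2).choose_spec⟩⟩

lemma Path.getLast_extend (F : CStrat M Set.univ) (L : M.Path) :
    (Path.extend M F L).1.getLast (Path.extend M F L).2.1
      = (M.exists_R_jointAction F L.2.1 L.2.2).choose :=
  List.getLast_concat ..

variable {M}

/-- The play of `F` from `w` whose first step goes to `v`; `playPath F hv k` is its
history up to time `k + 1`. -/
noncomputable def playPath (F : CStrat M Set.univ) {w v : W} (hv : M.Rall w v) (k : ℕ) :
    M.Path :=
  (Path.extend M F)^[k] ⟨[w, v], by simp, List.isChain_pair.2 hv⟩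

noncomputable def play (F : CStrat M Set.univ) {w v : W} (hv : M.Rall w v) : ℕ → W
  | 0 => w
  | k + 1 => (playPath F hv k).1.getLast (playPath F hv k).2.1

lemma play_add_two (F : CStrat M Set.univ) {w v : W} (hv : M.Rall w v) (k : ℕ) :
    play F hv (k + 2)
      = (M.exists_R_jointAction F (playPath F hv k).2.1 (playPath F hv k).2.2).choose := by
  show (playPath F hv (k + 1)).1.getLast _ = _
  simp only [playPath, Function.iterate_succ_apply']
  exact Path.getLast_extend M F _

lemma hist_play_succ (F : CStrat M Set.univ) {w v : W} (hv : M.Rall w v) (k : ℕ) :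
    hist (play F hv) (k + 1) = (playPath F hv k).1 := by
  induction k with
  | zero => simp [hist, play, playPath, List.ofFn_succ]
  | succ k ih =>
    rw [hist_succ, ih, play_add_two]
    simp only [playPath, Function.iterate_succ_apply']
    rfl

theorem exists_mem_outSet_of_R (F : CStrat M Set.univ) {w v : W} {δ : Fin n → Act}
    (hF : M.jointAction F [w] = δ) (hv : M.R δ w v) :
    ∃ l ∈ outSet M Set.univ w F, l.val 1 = v := by
  have hR : M.Rall w v := ⟨δ, hv⟩
  have hstep : ∀ k, M.R (M.jointAction F (hist (play F hR) k))
      (play F hR k) (play F hR (k + 1)) := by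
    rintro (_ | k)
    · simpa [hist, play, playPath, hF] using hv
    · rw [hist_play_succ, play_add_two]
      exact (M.exists_R_jointAction F (playPath F hR k).2.1 (playPath F hR k).2.2).choose_spec
  exact ⟨⟨play F hR, rfl, fun k => ⟨_, hstep k⟩⟩, fun k => ⟨_, fun _ _ => rfl, hstep k⟩,
    rfl⟩

end CGS

namespace Strat

variable {M : CGS n W Act} {i : Fin n}

lemma val_singleton_mem_choice (σ : Strat M i) (w : W) : σ.val [w] ∈ M.choice i w := by
  simpa using σ.2 [w] (List.cons_ne_nil _ _) (List.isChain_singleton w)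

open Classical in
noncomputable def withInitial {w : W} {a : Act} (ha : a ∈ M.choice i w) : Strat M i :=
  ⟨fun L => if L = [w] then a else (M.choice_nonempty i (L.getLast?.getD w)).some,
    fun L hne _ => by
      dsimp only
      split_ifs with hL
      · subst hL; exact ha
      · rw [List.getLast?_eq_getLast_of_ne_nil hne]
        exact Set.Nonempty.some_mem _⟩

lemma withInitial_val_singleton {w : W} {a : Act} (ha : a ∈ M.choice i w) :
    (withInitial ha).val [w] = a :=
  if_pos rfl

end Strat

lemma CStrat.exists_val_singleton_eq {M : CGS n W Act} (C : Set (Fin n)) {w v : W}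
    {δ : Fin n → Act} (hv : M.R δ w v) : ∃ t : CStrat M C, ∀ j hj, (t j hj).val [w] = δ j :=
  ⟨fun j _ => Strat.withInitial (M := M) (i := j) ⟨δ, ⟨v, hv⟩, rfl⟩,
    fun _ _ => Strat.withInitial_val_singleton _⟩

lemma CGS.jointAction_combine (M : CGS n W Act) {i : Fin n} {s : Strat M i}
    {t : CStrat M ({i}ᶜ : Set (Fin n))} {L : List W} {δ : Fin n → Act}
    (hs : s.val L = δ i) (ht : ∀ j (hj : j ∈ ({i}ᶜ : Set (Fin n))), (t j hj).val L = δ j) :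
    M.jointAction (combine M i s t) L = δ := by
  funext j
  by_cases hj : j = i
  · subst hj; simpa [CGS.jointAction, combine] using hs
  · simpa [CGS.jointAction, combine, hj] using ht j hj

theorem stmt_19_general (P : CGSP n W Act) (i : Fin n)
    (w : W) (s : Strat P.toCGS i)
    (h : ¬ ActionDominated P i w (s.val [w])) :
    ¬ Dominated P i w s := by
  rintro ⟨s', hdom⟩
  refine h ⟨s'.val [w], s'.val_singleton_mem_choice w, fun δ hδi v v' hv hv' => ?_⟩
  obtain ⟨t, ht⟩ := CStrat.exists_val_singleton_eq {i}ᶜ hv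
  obtain ⟨l, hl, hl1⟩ := CGS.exists_mem_outSet_of_R _ (P.jointAction_combine hδi.symm ht) hv
  obtain ⟨l', hl', hl1'⟩ := CGS.exists_mem_outSet_of_R _
    (P.jointAction_combine (Function.update_self i (s'.val [w]) δ).symm fun j hj =>
      (ht j hj).trans (Function.update_of_ne hj ..).symm) hv'
  exact ⟨l, l', hl1, hl1', hdom t l hl l' hl'⟩

/-- in a CGSP with short-sighted preferences, a strategy whose
first action is a non-dominated action at w is itself non-dominated at w. -/
theorem stmt_19 (P : CGSP n W Act) (hss : ShortSighted P) (i : Fin n)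
    (w : W) (s : Strat P.toCGS i)
    (h : ¬ ActionDominated P i w (s.val [w])) :
    ¬ Dominated P i w s :=
  stmt_19_general P i w s h
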